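/- If the label ℓ(u) of a vertex u is a prefix of the label ℓ(v) of a vertex v, and u is a ranked vertex, then v is reachable from u (there is a directed path from u to v). -/

import Mathlib

/-!
A ranked vertex `u` occurs in its own label: as long as `ℓ_i(u) ≠ u`, the vertex `u` stays in
`A_{i+1}(u)`, while acyclicity makes the sets `A_i(u)` strictly shrink, so the construction can
only stop by choosing `u`. Hence `u` occurs in `ℓ(v)`, and every entry of `ℓ(v)` lies in `P(v)`.
-/

open Classical Finset
open scoped Classical

noncomputable section

variable {V : Type*}

/-- Reachability: `reach adj u v` iff there is a directed path from `u` to `v`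
(including the trivial path, so `reach adj v v` always holds). -/
def reach (adj : V → V → Prop) : V → V → Prop := Relation.ReflTransGen adj

/-- The graph has no (nontrivial) directed cycle. -/
def IsAcyclic (adj : V → V → Prop) : Prop := ∀ x, ¬ Relation.TransGen adj x x

/-- `P(v)`: the set of predecessors of `v` (vertices with a path to `v`, including `v`). -/
def predSet [Fintype V] (adj : V → V → Prop) (v : V) : Finset V :=
  Finset.univ.filter fun u => reach adj u v

/-- `S(v)`: the set of successors of `v` (vertices reachable from `v`, including `v`). -/
def succSet [Fintype V] (adj : V → V → Prop) (v : V) : Finset V :=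
  Finset.univ.filter fun u => reach adj v u

/-- The element of `A` of minimum rank (an arbitrary vertex if `A = ∅`). -/
def argminR [Nonempty V] (r : V → ℕ∞) (A : Finset V) : V :=
  if h : A.Nonempty then (Finset.exists_min_image A r h).choose else Classical.arbitrary V

/-- The sets `A_{i+1}(v)` (0-indexed: `Aset adj L r v i` is the paper's `A_{i+1}(v)`):
`A_1(v) = P(v) ∩ L`, and `A_{i+1}(v) = (S(ℓ_i(v)) ∩ P(v) ∩ L) \ {ℓ_i(v)}` where
`ℓ_i(v)` is the minimum-rank element of `A_i(v)`. -/
def Aset [Fintype V] [Nonempty V] (adj : V → V → Prop) (L : Finset V) (r : V → ℕ∞)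
    (v : V) : ℕ → Finset V
  | 0 => predSet adj v ∩ L
  | i + 1 =>
    if (Aset adj L r v i).Nonempty then
      (succSet adj (argminR r (Aset adj L r v i)) ∩ predSet adj v ∩ L).erase
        (argminR r (Aset adj L r v i))
    else ∅

/-- `ℓ_{i+1}(v)` (0-indexed). -/
def labVertex [Fintype V] [Nonempty V] (adj : V → V → Prop) (L : Finset V) (r : V → ℕ∞)
    (v : V) (i : ℕ) : V := argminR r (Aset adj L r v i)

/-- `k(v)`: the number of indices `i` with `A_{i+1}(v) ≠ ∅` (in a DAG the sets shrink,
so this is the largest `i` with `A_i(v) ≠ ∅`, in the paper's 1-indexed convention). -/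
def kOf [Fintype V] [Nonempty V] (adj : V → V → Prop) (L : Finset V) (r : V → ℕ∞) (v : V) : ℕ :=
  ((Finset.range (Fintype.card V + 1)).filter fun i => (Aset adj L r v i).Nonempty).card

/-- The label `ℓ(v) = (ℓ_1(v), …, ℓ_{k(v)}(v))`. -/
def labelSeq [Fintype V] [Nonempty V] (adj : V → V → Prop) (L : Finset V) (r : V → ℕ∞)
    (v : V) : List V :=
  (List.range (kOf adj L r v)).map (labVertex adj L r v)

/-- The rank sequence `r(ℓ(v))` with `+∞` appended. -/
def rankSeq [Fintype V] [Nonempty V] (adj : V → V → Prop) (L : Finset V) (r : V → ℕ∞)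
    (v : V) : List ℕ∞ :=
  ((labelSeq adj L r v).map r) ++ [⊤]

/-- `ℓ(u) ≺ ℓ(v)`: decreasing lexicographic order on the rank sequences with `+∞` appended. -/
def labLt [Fintype V] [Nonempty V] (adj : V → V → Prop) (L : Finset V) (r : V → ℕ∞)
    (u v : V) : Prop :=
  List.Lex (· < ·) (rankSeq adj L r v) (rankSeq adj L r u)

theorem IsAcyclic.reach_antisymm {adj : V → V → Prop} (hacyc : IsAcyclic adj) {a b : V}
    (hab : reach adj a b) (hba : reach adj b a) : a = b := by
  rcases Relation.reflTransGen_iff_eq_or_transGen.mp hab with h | h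
  · exact h.symm
  · exact absurd (h.trans_left hba) (hacyc a)

theorem argminR_mem [Nonempty V] (r : V → ℕ∞) {A : Finset V} (h : A.Nonempty) :
    argminR r A ∈ A := by
  rw [argminR, dif_pos h]
  exact (Finset.exists_min_image A r h).choose_spec.1

section Label

variable [Fintype V] [Nonempty V] {adj : V → V → Prop} {L : Finset V} {r : V → ℕ∞}
  {v x : V} {i : ℕ}

theorem mem_Aset_zero : x ∈ Aset adj L r v 0 ↔ reach adj x v ∧ x ∈ L := by
  simp [Aset, predSet]

theorem mem_Aset_succ :
    x ∈ Aset adj L r v (i + 1) ↔ (Aset adj L r v i).Nonempty ∧ x ≠ labVertex adj L r v i ∧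
      reach adj (labVertex adj L r v i) x ∧ reach adj x v ∧ x ∈ L := by
  by_cases h : (Aset adj L r v i).Nonempty
  · simp [Aset, labVertex, h, predSet, succSet]
  · simp [Aset, h]

theorem labVertex_mem (h : (Aset adj L r v i).Nonempty) :
    labVertex adj L r v i ∈ Aset adj L r v i :=
  argminR_mem r h

theorem reach_of_mem_Aset (hx : x ∈ Aset adj L r v i) : reach adj x v := by
  cases i with
  | zero => exact (mem_Aset_zero.1 hx).1
  | succ i => exact (mem_Aset_succ.1 hx).2.2.2.1

theorem Aset_nonempty_antitone : Antitone fun i => (Aset adj L r v i).Nonempty :=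
  antitone_nat_of_succ_le fun _ ⟨_, hx⟩ => (mem_Aset_succ.1 hx).1

theorem Aset_succ_subset_erase (hacyc : IsAcyclic adj) (i : ℕ) :
    Aset adj L r v (i + 1) ⊆ (Aset adj L r v i).erase (labVertex adj L r v i) := by
  intro x hx
  obtain ⟨hne, hx_ne, hreach_x, hxv, hxL⟩ := mem_Aset_succ.1 hx
  refine mem_erase.2 ⟨hx_ne, ?_⟩
  cases i with
  | zero => exact mem_Aset_zero.2 ⟨hxv, hxL⟩
  | succ j =>
    obtain ⟨hne_j, hℓ_ne, hreach_ℓ, -, -⟩ := mem_Aset_succ.1 (labVertex_mem hne)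
    refine mem_Aset_succ.2 ⟨hne_j, ?_, hreach_ℓ.trans hreach_x, hxv, hxL⟩
    rintro rfl
    exact hℓ_ne (hacyc.reach_antisymm hreach_x hreach_ℓ)

theorem card_Aset_succ_le (hacyc : IsAcyclic adj) (i : ℕ) :
    #(Aset adj L r v (i + 1)) ≤ #(Aset adj L r v i) - 1 := by
  by_cases h : (Aset adj L r v i).Nonempty
  · rw [← card_erase_of_mem (labVertex_mem h)]
    exact card_le_card (Aset_succ_subset_erase hacyc i)
  · have : Aset adj L r v (i + 1) = ∅ := by simp [Aset, h]
    simp [this]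

theorem card_Aset_le (hacyc : IsAcyclic adj) (i : ℕ) :
    #(Aset adj L r v i) ≤ Fintype.card V - i := by
  induction i with
  | zero => exact card_le_univ _
  | succ i ih => have := card_Aset_succ_le (L := L) (r := r) (v := v) hacyc i; omega

theorem Aset_card_eq_empty (hacyc : IsAcyclic adj) :
    Aset adj L r v (Fintype.card V) = ∅ :=
  card_eq_zero.1 (Nat.le_zero.1 ((card_Aset_le hacyc _).trans_eq (Nat.sub_self _)))

theorem Aset_nonempty_of_lt_kOf (hi : i < kOf adj L r v) : (Aset adj L r v i).Nonempty := by
  by_contra hempty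
  have hsub : (range (Fintype.card V + 1)).filter (fun j => (Aset adj L r v j).Nonempty) ⊆
      range i := fun j hj => mem_range.2 <| lt_of_not_ge fun hij =>
    hempty (Aset_nonempty_antitone hij (mem_filter.1 hj).2)
  have := card_le_card hsub
  rw [card_range] at this
  exact absurd hi (not_lt.2 this)

theorem lt_kOf_of_Aset_nonempty (hacyc : IsAcyclic adj) (h : (Aset adj L r v i).Nonempty) :
    i < kOf adj L r v := by
  have hi : i < Fintype.card V := lt_of_not_ge fun hle => by
    simpa [Aset_card_eq_empty hacyc] using Aset_nonempty_antitone hle h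
  have hsub : range (i + 1) ⊆
      (range (Fintype.card V + 1)).filter (fun j => (Aset adj L r v j).Nonempty) := by
    intro j hj
    have hji : j ≤ i := Nat.lt_succ_iff.1 (mem_range.1 hj)
    exact mem_filter.2 ⟨mem_range.2 (by omega), Aset_nonempty_antitone hji h⟩
  have := card_le_card hsub
  rw [card_range] at this
  exact this

theorem reach_of_mem_labelSeq (hx : x ∈ labelSeq adj L r v) : reach adj x v := by
  obtain ⟨i, hi, rfl⟩ := List.mem_map.1 hx
  exact reach_of_mem_Aset (labVertex_mem (Aset_nonempty_of_lt_kOf (List.mem_range.1 hi)))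

theorem self_mem_labelSeq (hacyc : IsAcyclic adj) (hv : v ∈ L) : v ∈ labelSeq adj L r v := by
  by_contra hnot
  have hne : ∀ i < kOf adj L r v, labVertex adj L r v i ≠ v := fun i hi heq =>
    hnot (List.mem_map.2 ⟨i, List.mem_range.2 hi, heq⟩)
  have hmem : ∀ i, v ∈ Aset adj L r v i := by
    intro i
    induction i with
    | zero => exact mem_Aset_zero.2 ⟨Relation.ReflTransGen.refl, hv⟩
    | succ i ih =>
      exact mem_Aset_succ.2 ⟨⟨v, ih⟩, (hne i (lt_kOf_of_Aset_nonempty hacyc ⟨v, ih⟩)).symm,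
        reach_of_mem_Aset (labVertex_mem ⟨v, ih⟩), Relation.ReflTransGen.refl, hv⟩
  simpa [Aset_card_eq_empty hacyc] using hmem (Fintype.card V)

end Label

theorem reachable_of_label_prefix_general [Fintype V] [Nonempty V]
    (adj : V → V → Prop) (hacyc : IsAcyclic adj)
    (L : Finset V) (r : V → ℕ∞)
    (u v : V) (hpre : (labelSeq adj L r u).IsPrefix (labelSeq adj L r v))
    (hu : u ∈ L) :
    reach adj u v :=
  reach_of_mem_labelSeq (hpre.subset (self_mem_labelSeq hacyc hu))

/-- if `ℓ(u)` is a prefix of `ℓ(v)` and `u` is ranked then `v` is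
reachable from `u`. -/
theorem reachable_of_label_prefix [Fintype V] [Nonempty V]
    (adj : V → V → Prop) (hacyc : IsAcyclic adj)
    (L : Finset V) (r : V → ℕ∞)
    (hfin : ∀ w ∈ L, r w ≠ ⊤) (hpos : ∀ w ∈ L, 0 < r w)
    (hinf : ∀ w ∉ L, r w = ⊤) (hinj : Set.InjOn r L)
    (u v : V) (hpre : (labelSeq adj L r u).IsPrefix (labelSeq adj L r v))
    (hu : u ∈ L) :
    reach adj u v :=
  reachable_of_label_prefix_general adj hacyc L r u v hpre hu
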